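/- arXiv:1705.02189 — 2 statements merged into one kernel-verified Lean document; each statement's English description precedes it below -/
import Mathlib

section
/- Consider h : ℝ³ → ℝ³ defined by h(x) = (sgn(x₂+x₃−2x₁), sgn(x₁+x₃−2x₂), sgn(x₁+x₂−2x₃)), where sgn is the scalar signum. For every point x₀ = η·(1,1,1) with η ∈ ℝ, the Filippov set-valued map satisfies F[h](x₀) = co{ν₁, ν₂, ν₃, −ν₁, −ν₂, −ν₃}, where ν₁ = (1,1,−1), ν₂ = (1,−1,1), ν₃ = (−1,1,1). In particular, {η·(1,1,1) : η ∈ [−1/3, 1/3]} ⊆ F[h](x₀). -/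
open MeasureTheory Set
open scoped ENNReal

noncomputable def eBall {ι : Type*} [Fintype ι] (x : ι → ℝ) (δ : ℝ) : Set (ι → ℝ) :=
  {y | Real.sqrt (∑ i, (y i - x i) ^ 2) < δ}

noncomputable def filippov {ι κ : Type*} [Fintype ι] [Fintype κ]
    (h : (ι → ℝ) → (κ → ℝ)) (x : ι → ℝ) : Set (κ → ℝ) :=
  ⋂ (δ : ℝ) (_ : 0 < δ) (S : Set (ι → ℝ)) (_ : volume S = 0),
    closure (convexHull ℝ (h '' (eBall x δ \ S)))

noncomputable def ssign (s : ℝ) : ℝ := if 0 < s then 1 else if s < 0 then -1 else 0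

/-- The three-node example system
`h(x) = (sgn(x₂+x₃−2x₁), sgn(x₁+x₃−2x₂), sgn(x₁+x₂−2x₃))`. -/
noncomputable def hex (x : Fin 3 → ℝ) : Fin 3 → ℝ :=
  ![ssign (x 1 + x 2 - 2 * x 0), ssign (x 0 + x 2 - 2 * x 1), ssign (x 0 + x 1 - 2 * x 2)]

/-!
Writing `hex x k = sgn (∑ⱼ xⱼ - 3 xₖ)`, every value of `hex` is the sign vector of a triple with
zero sum. In the basis `ν₁, ν₂, ν₃` the set `co{±νᵢ}` is the unit ℓ¹-ball, and all those sign
vectors lie in it; as it is closed, `F[hex](x) ⊆ co{±νᵢ}` at every `x`. Conversely, for each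
vertex `ν = ±νᵢ`, `hex ≡ ν` on the open cone `{y | ∀ k, νₖ (∑ⱼ yⱼ - 3 yₖ) > 0}`, which contains
`η (1,1,1) - t ν` for all `t > 0`. Removing a null set cannot empty an open set, so every vertex
lies in the closed convex set `F[hex](η (1,1,1))`.
-/

open Filter Topology

theorem sum_smul_mem_convexHull_union_neg {ι E : Type*} [Fintype ι] [Nonempty ι]
    [AddCommGroup E] [Module ℝ E] (u : ι → E) {α : ι → ℝ} (hα : ∑ i, |α i| ≤ 1) :
    ∑ i, α i • u i ∈ convexHull ℝ (range u ∪ -range u) := by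
  -- the slack `1 - ∑ |α i|` is spread evenly over the `2 * card ι` points `± u i`
  set ρ := (1 - ∑ i, |α i|) / (2 * Fintype.card ι)
  have hρ : 0 ≤ ρ := div_nonneg (sub_nonneg.2 hα) (by positivity)
  let w : ι ⊕ ι → ℝ := Sum.elim (fun i => (α i)⁺ + ρ) (fun i => (α i)⁻ + ρ)
  let z : ι ⊕ ι → E := Sum.elim u (-u)
  have hsum : ∑ k, w k • z k = ∑ i, α i • u i := by
    simp only [Fintype.sum_sum_type, w, z, Sum.elim_inl, Sum.elim_inr, Pi.neg_apply,
      ← Finset.sum_add_distrib, smul_neg, ← sub_eq_add_neg, ← sub_smul, add_sub_add_right_eq_sub,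
      posPart_sub_negPart]
  have hw : ∑ k, w k = 1 := by
    simp only [Fintype.sum_sum_type, w, Sum.elim_inl, Sum.elim_inr, Finset.sum_add_distrib,
      Finset.sum_const, Finset.card_univ, nsmul_eq_mul]
    rw [add_add_add_comm, ← Finset.sum_add_distrib]
    simp only [posPart_add_negPart, ρ]
    field_simp
    ring
  rw [← hsum]
  refine (convex_convexHull ℝ _).sum_mem (fun k _ => ?_) hw (fun k _ => subset_convexHull ℝ _ ?_)
  · rcases k with i | i <;> simp only [w, Sum.elim_inl, Sum.elim_inr] <;> positivity
  · rcases k with i | i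
    · exact Or.inl (mem_range_self i)
    · exact Or.inr (by simp [z])

section Filippov

variable {ι κ : Type*} [Fintype ι] [Fintype κ]

theorem isOpen_eBall (x : ι → ℝ) (δ : ℝ) : IsOpen (eBall x δ) :=
  isOpen_lt (by fun_prop) continuous_const

theorem mem_eBall_self (x : ι → ℝ) {δ : ℝ} (hδ : 0 < δ) : x ∈ eBall x δ := by
  simpa [eBall] using hδ

theorem convex_filippov (h : (ι → ℝ) → κ → ℝ) (x : ι → ℝ) : Convex ℝ (filippov h x) :=
  convex_iInter fun _ => convex_iInter fun _ => convex_iInter fun _ => convex_iInter fun _ =>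
    (convex_convexHull ℝ _).closure

theorem filippov_subset_closure_convexHull_range (h : (ι → ℝ) → κ → ℝ) (x : ι → ℝ) :
    filippov h x ⊆ closure (convexHull ℝ (range h)) := by
  intro v hv
  simp only [filippov, mem_iInter] at hv
  exact closure_mono (convexHull_mono (image_subset_range _ _)) (hv 1 one_pos ∅ measure_empty)

theorem mem_filippov_of_isOpen {h : (ι → ℝ) → κ → ℝ} {x : ι → ℝ} {ν : κ → ℝ} {U : Set (ι → ℝ)}
    (hU : IsOpen U) (hxU : x ∈ closure U) (hν : ∀ y ∈ U, h y = ν) : ν ∈ filippov h x := by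
  simp only [filippov, mem_iInter]
  intro δ hδ S hS
  have hne : (U ∩ eBall x δ).Nonempty :=
    mem_closure_iff.1 hxU _ (isOpen_eBall x δ) (mem_eBall_self x hδ) |>.imp fun _ h => h.symm
  have hnot : ¬ U ∩ eBall x δ ⊆ S := fun hsub =>
    (hne.mono (interior_maximal hsub (hU.inter (isOpen_eBall x δ)))).ne_empty
      (Measure.interior_eq_empty_of_null hS)
  obtain ⟨y, ⟨hyU, hyB⟩, hyS⟩ := not_subset.1 hnot
  exact subset_closure (subset_convexHull ℝ _ ⟨y, ⟨hyB, hyS⟩, hν y hyU⟩)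

end Filippov

theorem ssign_pos {s : ℝ} (hs : 0 < s) : ssign s = 1 := by simp [ssign, hs]

theorem ssign_neg {s : ℝ} (hs : s < 0) : ssign s = -1 := by
  simp [ssign, hs, hs.not_gt]

theorem ssign_zero : ssign 0 = 0 := by simp [ssign]

theorem ssign_eq_of_mul_pos {e s : ℝ} (he : |e| = 1) (h : 0 < e * s) : ssign s = e := by
  rcases (abs_eq zero_le_one).1 he with rfl | rfl
  · exact ssign_pos (by linarith)
  · exact ssign_neg (by linarith)

theorem abs_ssign_add_le_two {a b c : ℝ} (h : a + b + c = 0) :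
    |ssign a + ssign b| + |ssign a + ssign c| + |ssign b + ssign c| ≤ 2 := by
  rcases lt_trichotomy a 0 with ha | rfl | ha <;>
  rcases lt_trichotomy b 0 with hb | rfl | hb <;>
  rcases lt_trichotomy c 0 with hc | rfl | hc <;>
  first
  | linarith
  | simp only [ssign_pos, ssign_neg, ssign_zero, *]; norm_num

theorem hex_apply (x : Fin 3 → ℝ) (i : Fin 3) : hex x i = ssign (∑ j, x j - 3 * x i) := by
  fin_cases i <;> simp [hex, Fin.sum_univ_three] <;> ring_nf

def nu : Fin 3 → Fin 3 → ℝ := ![![1, 1, -1], ![1, -1, 1], ![-1, 1, 1]]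

theorem range_nu_union_neg : range nu ∪ -range nu =
    {![1, 1, -1], ![1, -1, 1], ![-1, 1, 1], -![1, 1, -1], -![1, -1, 1], -![-1, 1, 1]} := by
  ext v
  simp [nu]
  tauto

theorem mem_convexHull_nu_of_abs_add_le {v : Fin 3 → ℝ}
    (hv : |v 0 + v 1| + |v 0 + v 2| + |v 1 + v 2| ≤ 2) :
    v ∈ convexHull ℝ (range nu ∪ -range nu) := by
  have hv_eq : v = ∑ i, ![(v 0 + v 1) / 2, (v 0 + v 2) / 2, (v 1 + v 2) / 2] i • nu i := by
    funext j; fin_cases j <;> simp [nu, Fin.sum_univ_three] <;> ring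
  rw [hv_eq]
  apply sum_smul_mem_convexHull_union_neg
  simp only [Fin.sum_univ_three, Matrix.cons_val, abs_div, abs_two]
  linarith

theorem hex_mem_convexHull_nu (x : Fin 3 → ℝ) : hex x ∈ convexHull ℝ (range nu ∪ -range nu) := by
  apply mem_convexHull_nu_of_abs_add_le
  simp only [hex_apply]
  exact abs_ssign_add_le_two (by simp only [Fin.sum_univ_three]; ring)

theorem filippov_hex_subset_convexHull_nu (x : Fin 3 → ℝ) :
    filippov hex x ⊆ convexHull ℝ (range nu ∪ -range nu) :=
  (filippov_subset_closure_convexHull_range hex x).trans <|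
    closure_minimal (convexHull_min (range_subset_iff.2 hex_mem_convexHull_nu)
      (convex_convexHull ℝ _)) (((finite_range nu).union (finite_range nu).neg).isClosed_convexHull ℝ)

theorem mem_filippov_hex_of_mem {ν : Fin 3 → ℝ} (hν : ν ∈ range nu ∪ -range nu) (η : ℝ) :
    ν ∈ filippov hex (fun _ => η) := by
  obtain ⟨hunit, hcone⟩ : (∀ i, |ν i| = 1) ∧ ∀ i, 0 < ν i * (3 * ν i - ∑ j, ν j) := by
    rw [range_nu_union_neg] at hν
    rcases hν with rfl | rfl | rfl | rfl | rfl | rfl <;>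
      simp [Fin.forall_fin_succ, Fin.sum_univ_three] <;> norm_num
  let U := {y : Fin 3 → ℝ | ∀ i, 0 < ν i * (∑ j, y j - 3 * y i)}
  have hU : IsOpen U := by
    simp only [U, ofPred_forall]
    exact isOpen_iInter_of_finite fun i => isOpen_lt continuous_const (by fun_prop)
  refine mem_filippov_of_isOpen hU ?_ fun y hy =>
    funext fun i => (hex_apply y i).trans (ssign_eq_of_mul_pos (hunit i) (hy i))
  refine mem_closure_of_tendsto (f := fun t : ℝ => (fun _ => η) - t • ν) (b := 𝓝[>] 0) ?_ ?_
  · have hf : Continuous fun t : ℝ => (fun _ => η) - t • ν := by fun_prop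
    simpa using (hf.tendsto 0).mono_left nhdsWithin_le_nhds
  · filter_upwards [self_mem_nhdsWithin] with t (ht : 0 < t) i
    have harg : ∑ j, (η - t * ν j) - 3 * (η - t * ν i) = t * (3 * ν i - ∑ j, ν j) := by
      simp only [Fin.sum_univ_three]; ring
    simp only [Pi.sub_apply, Pi.smul_apply, smul_eq_mul, harg]
    rw [mul_left_comm]
    exact mul_pos ht (hcone i)

theorem convexHull_nu_subset_filippov_hex (η : ℝ) :
    convexHull ℝ (range nu ∪ -range nu) ⊆ filippov hex (fun _ => η) :=
  convexHull_min (fun _ hν => mem_filippov_hex_of_mem hν η) (convex_filippov hex _)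

/-- **Filippov set-valued map on the consensus line for the 3-node example.**
At every consensus point `x₀ = η (1,1,1)`,
`F[h](x₀) = co{ν₁, ν₂, ν₃, -ν₁, -ν₂, -ν₃}` with `ν₁ = (1,1,-1)`, `ν₂ = (1,-1,1)`,
`ν₃ = (-1,1,1)`; in particular `{η (1,1,1) : η ∈ [-1/3, 1/3]} ⊆ F[h](x₀)`. -/
theorem filippov_three_node_consensus (η : ℝ) :
    filippov hex (fun _ => η) =
      convexHull ℝ ({![1, 1, -1], ![1, -1, 1], ![-1, 1, 1],
        -![1, 1, -1], -![1, -1, 1], -![-1, 1, 1]} : Set (Fin 3 → ℝ)) ∧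
    (fun c : ℝ => (fun _ => c : Fin 3 → ℝ)) '' Set.Icc (-(1/3) : ℝ) (1/3) ⊆
      filippov hex (fun _ => η) := by
  have heq : filippov hex (fun _ => η) = convexHull ℝ (range nu ∪ -range nu) :=
    (filippov_hex_subset_convexHull_nu _).antisymm (convexHull_nu_subset_filippov_hex η)
  refine ⟨heq.trans (by rw [range_nu_union_neg]), ?_⟩
  rintro _ ⟨c, ⟨hc₁, hc₂⟩, rfl⟩
  rw [heq]
  apply mem_convexHull_nu_of_abs_add_le
  have : |c + c| ≤ 2 / 3 := abs_le.2 ⟨by linarith, by linarith⟩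
  linarith
end

section
/- Let g : ℝ^m → ℝ^n be continuously differentiable with its Jacobian Dg(x) of full rank n at a point x ∈ ℝ^m, and let f : ℝ^n → ℝ^p be locally bounded. Then F[f∘g](x) = F[f](g(x)). -/
open MeasureTheory Set
open scoped ENNReal

/-- A map between finite-dimensional real coordinate spaces is locally bounded. -/
def LocBounded {ι κ : Type*} [Fintype ι] [Fintype κ] (f : (ι → ℝ) → (κ → ℝ)) : Prop :=
  ∀ x : ι → ℝ, ∃ δ : ℝ, 0 < δ ∧ Bornology.IsBounded (f '' eBall x δ)

/-!
Near `x`, the submersion `g` is the first coordinate of a `C¹` chart `Φ` with values in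
`ℝⁿ × ker Dg(x)`: apply the inverse function theorem to `z ↦ (g z, P z)`, where `P` projects onto
`ker Dg(x)`. As `Φ` and `Φ⁻¹` are differentiable, both preserve null sets. Hence the preimage
under `g` of a null set is null near `x`, which gives `F[f ∘ g](x) ⊆ F[f](g x)`. Conversely, if
`S` is null then so is `Φ(S)`, and by Fubini almost every fibre `{y} × W` of a box inside the
chart's image leaves `Φ(S)`; so `g` maps the complement of `S` near `x` onto almost all of a
neighbourhood of `g x`, which gives the reverse inclusion.
-/

open Filter Topology

section EuclideanBall

variable {ι : Type*} [Fintype ι]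

theorem eBall_eq_preimage_ball (x : ι → ℝ) (δ : ℝ) :
    eBall x δ = (EuclideanSpace.equiv ι ℝ).symm ⁻¹'
      Metric.ball ((EuclideanSpace.equiv ι ℝ).symm x) δ := by
  ext y
  simp [eBall, EuclideanSpace.dist_eq, Real.dist_eq, sq_abs]

theorem nhds_basis_eBall (x : ι → ℝ) : (𝓝 x).HasBasis (0 < ·) (eBall x) := by
  let e := (EuclideanSpace.equiv ι ℝ).symm.toHomeomorph
  have h := (Metric.nhds_basis_ball (x := e x)).comap e
  rw [e.comap_nhds_eq, e.symm_apply_apply] at h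
  convert h using 1
  exact funext (eBall_eq_preimage_ball x)

end EuclideanBall

theorem filippov_subset_filippov {ι₁ ι₂ κ : Type*} [Fintype ι₁] [Fintype ι₂] [Fintype κ]
    {h₁ : (ι₁ → ℝ) → (κ → ℝ)} {h₂ : (ι₂ → ℝ) → (κ → ℝ)} {x₁ : ι₁ → ℝ} {x₂ : ι₂ → ℝ}
    (H : ∀ V ∈ 𝓝 x₂, ∀ T, volume T = 0 →
      ∃ U ∈ 𝓝 x₁, ∃ S, volume S = 0 ∧ h₁ '' (U \ S) ⊆ h₂ '' (V \ T)) :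
    filippov h₁ x₁ ⊆ filippov h₂ x₂ := by
  simp only [filippov, subset_iInter_iff]
  intro ε hε T hT
  obtain ⟨U, hU, S, hS, hsub⟩ := H _ ((nhds_basis_eBall x₂).mem_of_mem hε) T hT
  obtain ⟨δ, hδ, hδU⟩ := (nhds_basis_eBall x₁).mem_iff.1 hU
  refine (iInter₂_subset δ hδ).trans ((iInter₂_subset S hS).trans (closure_mono ?_))
  exact convexHull_mono ((image_mono (sdiff_subset_sdiff_left hδU)).trans hsub)

theorem MeasureTheory.Measure.ae_exists_prodMk_notMem {α β : Type*} [MeasurableSpace α]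
    [MeasurableSpace β] {μ : Measure α} {ν : Measure β} [SFinite ν] {N : Set (α × β)}
    (hN : μ.prod ν N = 0) {W : Set β} (hW : ν W ≠ 0) : ∀ᵐ y ∂μ, ∃ k ∈ W, (y, k) ∉ N := by
  filter_upwards [ae_ae_of_ae_prod (measure_eq_zero_iff_ae_notMem.1 hN)] with y hy
  exact exists_mem_of_measure_ne_zero_of_ae hW (ae_restrict_of_ae hy)

theorem LinearMap.finrank_prod_ker_of_surjective {K V W : Type*} [DivisionRing K]
    [AddCommGroup V] [Module K V] [FiniteDimensional K V] [AddCommGroup W] [Module K W]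
    {A : V →ₗ[K] W} (hA : Function.Surjective A) :
    Module.finrank K (W × A.ker) = Module.finrank K V := by
  have : FiniteDimensional K W := Module.Finite.of_surjective A hA
  rw [Module.finrank_prod, ← A.finrank_range_add_finrank_ker, range_eq_top.2 hA, finrank_top]

section Submersion

variable {E F : Type*} [NormedAddCommGroup E] [NormedSpace ℝ E] [FiniteDimensional ℝ E]
  [NormedAddCommGroup F] [NormedSpace ℝ F] [FiniteDimensional ℝ F] {g : E → F} {x : E}

theorem ContDiffAt.exists_openPartialHomeomorph_fst_eq (hg : ContDiffAt ℝ 1 g x)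
    (hsurj : Function.Surjective (fderiv ℝ g x)) :
    ∃ Φ : OpenPartialHomeomorph E (F × (fderiv ℝ g x).ker),
      x ∈ Φ.source ∧ (∀ z, (Φ z).1 = g z) ∧
      DifferentiableOn ℝ Φ Φ.source ∧ DifferentiableOn ℝ Φ.symm Φ.target := by
  set A := fderiv ℝ g x
  obtain ⟨P, hP⟩ := A.ker_closedComplemented_of_finiteDimensional_range
  let L : E ≃L[ℝ] F × A.ker := A.equivProdOfSurjectiveOfIsCompl P
    (LinearMap.range_eq_top.2 hsurj) (LinearMap.range_eq_of_proj hP)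
    (LinearMap.isCompl_of_proj hP)
  have hΦ : ContDiffAt ℝ 1 (fun z => (g z, P z)) x := hg.prodMk P.contDiff.contDiffAt
  have hL : HasFDerivAt (fun z => (g z, P z)) (L : E →L[ℝ] F × A.ker) x :=
    (hg.differentiableAt one_ne_zero).hasFDerivAt.prodMk P.hasFDerivAt
  let Φ := hΦ.toOpenPartialHomeomorph _ hL one_ne_zero
  let V := interior {y | DifferentiableAt ℝ Φ.symm y}
  let W := interior {z | DifferentiableAt ℝ g z}
  have hxV : Φ x ∈ V := mem_interior_iff_mem_nhds.2 <|
    ((hΦ.to_localInverse hL one_ne_zero).eventually (by simp)).mono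
      fun y hy => hy.differentiableAt one_ne_zero
  have hxW : x ∈ W := mem_interior_iff_mem_nhds.2 <|
    (hg.eventually (by simp)).mono fun z hz => hz.differentiableAt one_ne_zero
  have hsrc : x ∈ Φ.source := hΦ.mem_toOpenPartialHomeomorph_source hL one_ne_zero
  refine ⟨Φ.restrOpen (Φ.source ∩ Φ ⁻¹' V ∩ W)
    ((Φ.isOpen_inter_preimage isOpen_interior).inter isOpen_interior),
    ⟨hsrc, ⟨hsrc, hxV⟩, hxW⟩, fun z => rfl, ?_, ?_⟩
  · rintro z ⟨-, -, hzW⟩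
    have hgz : z ∈ {z | DifferentiableAt ℝ g z} := interior_subset hzW
    exact (hgz.prodMk P.differentiableAt).differentiableWithinAt
  · rintro y ⟨hy, ⟨-, hyV⟩, -⟩
    rw [mem_preimage, Φ.right_inv hy] at hyV
    have hΦy : y ∈ {y | DifferentiableAt ℝ Φ.symm y} := interior_subset hyV
    exact hΦy.differentiableWithinAt

end Submersion

section NullSets

variable {E F : Type*} [NormedAddCommGroup E] [NormedSpace ℝ E] [FiniteDimensional ℝ E]
  [MeasurableSpace E] [BorelSpace E] [NormedAddCommGroup F] [NormedSpace ℝ F]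
  [FiniteDimensional ℝ F] [MeasurableSpace F] [BorelSpace F]
  (μ : Measure E) [μ.IsAddHaarMeasure] (ν : Measure F) [ν.IsAddHaarMeasure]
  {g : E → F} {x : E}

theorem addHaar_image_eq_zero_of_differentiableOn_of_finrank_eq
    (hEF : Module.finrank ℝ E = Module.finrank ℝ F) {f : E → F} {s : Set E}
    (hf : DifferentiableOn ℝ f s) (hs : μ s = 0) : ν (f '' s) = 0 := by
  let L : F ≃L[ℝ] E := .ofFinrankEq hEF.symm
  have hLf : μ ((L ∘ f) '' s) = 0 :=
    addHaar_image_eq_zero_of_differentiableOn_of_addHaar_eq_zero μ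
      (L.differentiable.comp_differentiableOn hf) hs
  have hsub : f '' s ⊆ L ⁻¹' ((L ∘ f) '' s) := by
    rintro _ ⟨z, hz, rfl⟩
    exact ⟨z, hz, rfl⟩
  refine measure_mono_null hsub (le_antisymm ?_ bot_le)
  calc ν (L ⁻¹' ((L ∘ f) '' s)) ≤ ν.map L ((L ∘ f) '' s) :=
        Measure.le_map_apply L.continuous.aemeasurable _
    _ = 0 := Measure.absolutelyContinuous_isAddHaarMeasure _ μ hLf

theorem ContDiffAt.exists_mem_nhds_measure_inter_preimage_eq_zero (hg : ContDiffAt ℝ 1 g x)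
    (hsurj : Function.Surjective (fderiv ℝ g x)) :
    ∃ U ∈ 𝓝 x, ∀ T, ν T = 0 → μ (U ∩ g ⁻¹' T) = 0 := by
  obtain ⟨Φ, hx, hfst, -, hsymm⟩ := hg.exists_openPartialHomeomorph_fst_eq hsurj
  refine ⟨Φ.source, Φ.open_source.mem_nhds hx, fun T hT => ?_⟩
  have hprod : (ν.prod (Measure.addHaar : Measure (fderiv ℝ g x).ker)) (T ×ˢ univ) = 0 := by
    rw [Measure.prod_prod, hT, zero_mul]
  refine measure_mono_null ?_ (addHaar_image_eq_zero_of_differentiableOn_of_finrank_eq _ μ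
    (LinearMap.finrank_prod_ker_of_surjective hsurj) (hsymm.mono inter_subset_left)
    (measure_mono_null inter_subset_right hprod))
  rintro z ⟨hz, hzT⟩
  exact ⟨Φ z, ⟨Φ.map_source hz, by simpa [hfst] using hzT⟩, Φ.left_inv hz⟩

theorem ContDiffAt.exists_mem_nhds_ae_mem_image_diff (hg : ContDiffAt ℝ 1 g x)
    (hsurj : Function.Surjective (fderiv ℝ g x)) {S : Set E} (hS : μ S = 0) {U : Set E}
    (hU : U ∈ 𝓝 x) : ∃ V ∈ 𝓝 (g x), ∀ᵐ y ∂ν, y ∈ V → y ∈ g '' (U \ S) := by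
  obtain ⟨Φ, hx, hfst, hdiff, -⟩ := hg.exists_openPartialHomeomorph_fst_eq hsurj
  set U' := interior U ∩ Φ.source
  have hN : (ν.prod (Measure.addHaar : Measure (fderiv ℝ g x).ker)) (Φ '' (U' ∩ S)) = 0 :=
    addHaar_image_eq_zero_of_differentiableOn_of_finrank_eq μ _
      (LinearMap.finrank_prod_ker_of_surjective hsurj).symm
      (hdiff.mono (inter_subset_left.trans inter_subset_right))
      (measure_mono_null inter_subset_right hS)
  have hΦU' : Φ '' U' ∈ 𝓝 (Φ x) :=
    (Φ.isOpen_image_of_subset_source (isOpen_interior.inter Φ.open_source)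
      inter_subset_right).mem_nhds (mem_image_of_mem _ ⟨mem_interior_iff_mem_nhds.2 hU, hx⟩)
  obtain ⟨V, hV, W, hW, hVW⟩ := mem_nhds_prod_iff.1 hΦU'
  refine ⟨V, hfst x ▸ hV, ?_⟩
  filter_upwards [Measure.ae_exists_prodMk_notMem hN (Measure.measure_pos_of_mem_nhds _ hW).ne']
    with y ⟨k, hkW, hkN⟩ hyV
  obtain ⟨z, hzU', hz⟩ := hVW (mk_mem_prod hyV hkW)
  refine ⟨z, ⟨interior_subset hzU'.1, fun hzS => hkN (hz ▸ mem_image_of_mem _ ⟨hzU', hzS⟩)⟩, ?_⟩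
  rw [← hfst, hz]

end NullSets

theorem filippov_comp_general {m n p : ℕ}
    (g : (Fin m → ℝ) → (Fin n → ℝ)) (hg : ContDiff ℝ 1 g)
    (x : Fin m → ℝ) (hrank : Function.Surjective (fderiv ℝ g x))
    (f : (Fin n → ℝ) → (Fin p → ℝ)) :
    filippov (f ∘ g) x = filippov f (g x) := by
  apply subset_antisymm
  · obtain ⟨U₀, hU₀, hnull⟩ :=
      hg.contDiffAt.exists_mem_nhds_measure_inter_preimage_eq_zero volume volume hrank
    refine filippov_subset_filippov fun V hV T hT => ⟨U₀ ∩ g ⁻¹' V,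
      inter_mem hU₀ (hg.continuous.continuousAt.preimage_mem_nhds hV), U₀ ∩ g ⁻¹' T,
      hnull T hT, ?_⟩
    rintro _ ⟨z, ⟨⟨hzU₀, hzV⟩, hzT⟩, rfl⟩
    exact ⟨g z, ⟨hzV, fun h => hzT ⟨hzU₀, h⟩⟩, rfl⟩
  · refine filippov_subset_filippov fun U hU S hS => ?_
    obtain ⟨V, hV, hae⟩ :=
      hg.contDiffAt.exists_mem_nhds_ae_mem_image_diff volume volume hrank hS hU
    refine ⟨V, hV, {y | ¬(y ∈ V → y ∈ g '' (U \ S))}, ae_iff.1 hae, ?_⟩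
    rintro _ ⟨y, ⟨hyV, hyT⟩, rfl⟩
    obtain ⟨z, hz, rfl⟩ := not_not.1 hyT hyV
    exact ⟨z, hz, rfl⟩

/-- **Chain rule for the Filippov set-valued map (Proposition 1(2)).**
If `g : ℝ^m → ℝ^n` is `C¹` with surjective (full-rank-`n`) Jacobian at `x`, and
`f : ℝ^n → ℝ^p` is locally bounded, then `F[f ∘ g](x) = F[f](g(x))`. -/
theorem filippov_comp {m n p : ℕ}
    (g : (Fin m → ℝ) → (Fin n → ℝ)) (hg : ContDiff ℝ 1 g)
    (x : Fin m → ℝ) (hrank : Function.Surjective (fderiv ℝ g x))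
    (f : (Fin n → ℝ) → (Fin p → ℝ)) (hf : LocBounded f) :
    filippov (f ∘ g) x = filippov f (g x) :=
  filippov_comp_general g hg x hrank f
end
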